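/- arXiv:1108.1578 — 5 statements merged into one kernel-verified Lean document; each statement's English description precedes it below -/
import Mathlib

section
/- Let G be a finite additive abelian group with |G| = N, let g, h : G → [0,1] with E g = θ, and let δ₁ > 0. If g − h is δ₁-uniform, then Σ_{x ∈ G} |g*g(x) − h*h(x)|² ≤ δ₁²(4θ + δ₁)N³. -/
open Finset
open scoped Classical Pointwise

/-- The unnormalized convolution `f*g(x) = Σ_{a+b=x} f(a)g(b)`. -/
def convR {G : Type*} [AddCommGroup G] [Fintype G] (f g : G → ℝ) (x : G) : ℝ :=
  ∑ a : G, f a * g (x - a)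

/-- The unnormalized Fourier transform `f̂(χ) = Σ_x f(x)χ(x)` of a real-valued function. -/
noncomputable def ft {G : Type*} [AddCommGroup G] [Fintype G] (f : G → ℝ) (χ : AddChar G ℂ) : ℂ :=
  ∑ x : G, (f x : ℂ) * χ x

/-- `f` is `α`-uniform if `|f̂(χ)| ≤ α·N` for every character `χ`. -/
def IsUniform {G : Type*} [AddCommGroup G] [Fintype G] (f : G → ℝ) (α : ℝ) : Prop :=
  ∀ χ : AddChar G ℂ, ‖ft f χ‖ ≤ α * (Fintype.card G)

/-- Indicator function of a finite set. -/
noncomputable def indR {G : Type*} (A : Finset G) : G → ℝ := fun x => if x ∈ A then 1 else 0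

/-- The Bohr neighborhood `B(Λ, ε) = {x : |1 − χ(x)| ≤ ε for all χ ∈ Λ}`. -/
noncomputable def bohr {G : Type*} [AddCommGroup G] [Fintype G]
    (Λ : Finset (AddChar G ℂ)) (ε : ℝ) : Finset G :=
  Finset.univ.filter fun x => ∀ χ ∈ Λ, ‖1 - χ x‖ ≤ ε

/-!
Since `g*g − h*h = (g − h)*(g + h)`, Parseval's identity and the convolution identity
`(f*k)^ = f̂ k̂` give `N Σ |g*g − h*h|² = Σ_χ |(g−h)^(χ)|² |(g+h)^(χ)|² ≤ (δ₁N)² · N Σ (g + h)²`.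
For values in `[0,1]`, `(g + h)² ≤ 3g + h`, and the trivial character shows `Σ h ≤ Σ g + δ₁N`,
so `Σ (g + h)² ≤ (4θ + δ₁)N`.
-/

namespace convR

variable {G : Type*} [AddCommGroup G] [Fintype G]

lemma comm (f k : G → ℝ) (x : G) : convR f k x = convR k f x := by
  unfold convR
  rw [← Equiv.sum_comp (Equiv.subLeft x)]
  refine Finset.sum_congr rfl fun a _ => ?_
  simp [Equiv.subLeft, mul_comm]

lemma sub_add (f k : G → ℝ) (x : G) :
    convR (f - k) (f + k) x = convR f f x - convR k k x := by
  have expand :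
      convR (f - k) (f + k) x = convR f f x + convR f k x - convR k f x - convR k k x := by
    simp only [convR, Pi.sub_apply, Pi.add_apply, ← Finset.sum_add_distrib,
      ← Finset.sum_sub_distrib]
    exact Finset.sum_congr rfl fun a _ => by ring
  rw [expand, comm k f]
  ring

end convR

section Fourier

variable {G : Type*} [AddCommGroup G] [Fintype G]

lemma ft_convR (f k : G → ℝ) (χ : AddChar G ℂ) : ft (convR f k) χ = ft f χ * ft k χ := by
  simp only [ft, convR, Complex.ofReal_sum, Complex.ofReal_mul, Finset.sum_mul]
  rw [Finset.sum_comm]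
  refine Finset.sum_congr rfl fun a _ => ?_
  rw [Finset.mul_sum, ← Equiv.sum_comp (Equiv.addLeft a)]
  refine Finset.sum_congr rfl fun b _ => ?_
  simp only [Equiv.coe_addLeft, add_sub_cancel_left, AddChar.map_add_eq_mul]
  ring

lemma ft_zero (f : G → ℝ) : ft f 0 = ((∑ x, f x : ℝ) : ℂ) := by
  simp [ft]

lemma sum_normSq_ft (f : G → ℝ) :
    ∑ χ : AddChar G ℂ, Complex.normSq (ft f χ) = Fintype.card G * ∑ x, f x ^ 2 := by
  suffices h : ∑ χ : AddChar G ℂ, ft f χ * starRingEnd ℂ (ft f χ)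
      = Fintype.card G * ∑ x, (f x : ℂ) ^ 2 by
    simp only [Complex.mul_conj] at h
    exact_mod_cast h
  calc ∑ χ : AddChar G ℂ, ft f χ * starRingEnd ℂ (ft f χ)
      = ∑ x, ∑ y, (f x : ℂ) * f y * ∑ χ : AddChar G ℂ, χ (x - y) := by
        simp only [ft, map_sum, Finset.sum_mul_sum]
        simp only [Finset.mul_sum]
        rw [Finset.sum_comm]
        refine Finset.sum_congr rfl fun x _ => ?_
        rw [Finset.sum_comm]
        refine Finset.sum_congr rfl fun y _ => Finset.sum_congr rfl fun χ _ => ?_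
        rw [map_mul, Complex.conj_ofReal, ← AddChar.map_neg_eq_conj, sub_eq_add_neg,
          AddChar.map_add_eq_mul]
        ring
    _ = Fintype.card G * ∑ x, (f x : ℂ) ^ 2 := by
        -- orthogonality of characters keeps only the diagonal `x = y`
        simp only [AddChar.sum_apply_eq_ite, sub_eq_zero, mul_ite, mul_zero,
          Finset.sum_ite_eq, Finset.mem_univ, if_true, Finset.mul_sum]
        exact Finset.sum_congr rfl fun x _ => by ring

end Fourier

section Uniform

variable {G : Type*} [AddCommGroup G] [Fintype G]

lemma IsUniform.abs_sum_le {f : G → ℝ} {α : ℝ} (hf : IsUniform f α) :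
    |∑ x, f x| ≤ α * Fintype.card G := by
  have h0 := hf 0
  rwa [ft_zero, Complex.norm_real, Real.norm_eq_abs] at h0

lemma IsUniform.sum_sq_convR_le {f : G → ℝ} {α : ℝ} (hf : IsUniform f α) (k : G → ℝ) :
    ∑ x, convR f k x ^ 2 ≤ α ^ 2 * Fintype.card G ^ 2 * ∑ x, k x ^ 2 := by
  have hN : (0 : ℝ) < Fintype.card G := by exact_mod_cast Fintype.card_pos
  have hft : ∀ χ, Complex.normSq (ft f χ) ≤ (α * Fintype.card G) ^ 2 := fun χ => by
    rw [← Complex.sq_norm]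
    exact pow_le_pow_left₀ (norm_nonneg _) (hf χ) 2
  refine le_of_mul_le_mul_left ?_ hN
  calc Fintype.card G * ∑ x, convR f k x ^ 2
      = ∑ χ : AddChar G ℂ, Complex.normSq (ft f χ) * Complex.normSq (ft k χ) := by
        simp only [← sum_normSq_ft, ft_convR, Complex.normSq_mul]
    _ ≤ ∑ χ : AddChar G ℂ, (α * Fintype.card G) ^ 2 * Complex.normSq (ft k χ) :=
        Finset.sum_le_sum fun χ _ =>
          mul_le_mul_of_nonneg_right (hft χ) (Complex.normSq_nonneg _)
    _ = Fintype.card G * (α ^ 2 * Fintype.card G ^ 2 * ∑ x, k x ^ 2) := by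
        rw [← Finset.mul_sum, sum_normSq_ft]
        ring

end Uniform

lemma add_sq_le_three_mul_add {a b : ℝ} (ha : a ∈ Set.Icc (0 : ℝ) 1)
    (hb : b ∈ Set.Icc (0 : ℝ) 1) :
    (a + b) ^ 2 ≤ 3 * a + b := by
  obtain ⟨ha₀, ha₁⟩ := ha
  obtain ⟨hb₀, hb₁⟩ := hb
  nlinarith [mul_le_mul_of_nonneg_left hb₁ ha₀]

theorem convolutions_uniformity_general {G : Type*} [AddCommGroup G] [Fintype G] (N : ℕ)
    (hN : Fintype.card G = N)
    (g h : G → ℝ) (hg : ∀ x, g x ∈ Set.Icc (0 : ℝ) 1) (hh : ∀ x, h x ∈ Set.Icc (0 : ℝ) 1)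
    (θ δ₁ : ℝ) (hθ : (∑ x : G, g x) / N = θ)
    (hu : IsUniform (g - h) δ₁) :
    ∑ x : G, |convR g g x - convR h h x| ^ 2 ≤ δ₁ ^ 2 * (4 * θ + δ₁) * (N : ℝ) ^ 3 := by
  have hNpos : (0 : ℝ) < N := by rw [← hN]; exact_mod_cast Fintype.card_pos
  have hg_sum : ∑ x, g x = θ * N := by rw [← hθ, div_mul_cancel₀ _ hNpos.ne']
  have hh_sum : ∑ x, h x ≤ θ * N + δ₁ * N := by
    have := (abs_le.mp (hN ▸ hu.abs_sum_le)).1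
    simp only [Pi.sub_apply, Finset.sum_sub_distrib] at this
    linarith
  have hsq_sum : ∑ x, (g + h) x ^ 2 ≤ (4 * θ + δ₁) * N :=
    calc ∑ x, (g + h) x ^ 2 ≤ ∑ x, (3 * g x + h x) :=
          Finset.sum_le_sum fun x _ => add_sq_le_three_mul_add (hg x) (hh x)
      _ = 3 * ∑ x, g x + ∑ x, h x := by rw [Finset.sum_add_distrib, Finset.mul_sum]
      _ ≤ (4 * θ + δ₁) * N := by linarith
  calc ∑ x, |convR g g x - convR h h x| ^ 2 = ∑ x, convR (g - h) (g + h) x ^ 2 := by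
        simp only [sq_abs, convR.sub_add]
    _ ≤ δ₁ ^ 2 * N ^ 2 * ∑ x, (g + h) x ^ 2 := hN ▸ hu.sum_sq_convR_le (g + h)
    _ ≤ δ₁ ^ 2 * N ^ 2 * ((4 * θ + δ₁) * N) := by gcongr
    _ = δ₁ ^ 2 * (4 * θ + δ₁) * N ^ 3 := by ring

/-- If `g − h` is `δ₁`-uniform then `Σ_x |g*g(x) − h*h(x)|² ≤ δ₁²(4θ + δ₁)N³`. -/
theorem convolutions_uniformity {G : Type*} [AddCommGroup G] [Fintype G] (N : ℕ)
    (hN : Fintype.card G = N)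
    (g h : G → ℝ) (hg : ∀ x, g x ∈ Set.Icc (0 : ℝ) 1) (hh : ∀ x, h x ∈ Set.Icc (0 : ℝ) 1)
    (θ δ₁ : ℝ) (hθ : (∑ x : G, g x) / N = θ) (hδ₁ : 0 < δ₁)
    (hu : IsUniform (g - h) δ₁) :
    ∑ x : G, |convR g g x - convR h h x| ^ 2 ≤ δ₁ ^ 2 * (4 * θ + δ₁) * (N : ℝ) ^ 3 :=
  convolutions_uniformity_general N hN g h hg hh θ δ₁ hθ hu
end

section
/- Let N be a prime, let Λ be a set of d characters of ℤ_N, and let r ∈ [0,2]. Then the Bohr neighborhood B(Λ, r) in ℤ_N contains an arithmetic progression of length at least r·N^{1/d}/(2π). -/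
open Finset
open scoped Classical Pointwise

/-!
Write every character of `ℤ_N` as `x ↦ e(t_χ x / N)`. Mapping `(x, v) ∈ ℤ_N × {0,…,m}^Λ` to
`(t_χ x + v_χ)_χ ∈ ℤ_N^Λ` and applying the pigeonhole principle once `N^d < N (m+1)^d` yields
`s ≠ 0` with every `t_χ s` congruent to some `k_χ` with `|k_χ| ≤ m` (Dirichlet's simultaneous
approximation). Then `|1 - χ(i s)| ≤ 2π i m / N`, so `0, s, 2s, …` stays in `B(Λ, r)` while
`2π m i ≤ r N`. The choice `m = ⌊N^{1 - 1/d}⌋` satisfies the pigeonhole condition and leaves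
room for `r N^{1/d} / (2π)` terms.
-/

open Real

namespace ZMod

variable {N : ℕ}

theorem exists_ne_zero_mul_eq_intCast_of_pow_lt [NeZero N] [Nontrivial (ZMod N)]
    {ι : Type*} [Fintype ι] (t : ι → ZMod N) (m : ℕ)
    (h : N ^ Fintype.card ι < N * (m + 1) ^ Fintype.card ι) :
    ∃ s : ZMod N, s ≠ 0 ∧ ∀ i, ∃ k : ℤ, |k| ≤ m ∧ t i * s = k := by
  rcases le_or_gt N m with hNm | hNm
  · refine ⟨1, one_ne_zero, fun i => ⟨(t i).val, ?_, by simp⟩⟩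
    have := (t i).val_lt
    rw [abs_of_nonneg (by positivity)]
    omega
  let f : ZMod N × (ι → Fin (m + 1)) → ι → ZMod N := fun p i => t i * p.1 + (p.2 i : ℕ)
  have hcard : Fintype.card (ι → ZMod N) < Fintype.card (ZMod N × (ι → Fin (m + 1))) := by
    simpa [Fintype.card_prod, Fintype.card_fun, ZMod.card] using h
  obtain ⟨⟨x, v⟩, ⟨y, w⟩, hne, hf⟩ := Fintype.exists_ne_map_eq_of_card_lt f hcard
  have hxy : x ≠ y := by
    rintro rfl
    refine hne (Prod.ext rfl (funext fun i => Fin.ext ?_))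
    have hvw := congrArg ZMod.val (add_left_cancel (congrFun hf i))
    rwa [val_natCast_of_lt (by omega), val_natCast_of_lt (by omega)] at hvw
  refine ⟨x - y, sub_ne_zero.2 hxy, fun i => ⟨(w i : ℕ) - (v i : ℕ), ?_, ?_⟩⟩
  · have := (v i).isLt
    have := (w i).isLt
    rw [abs_le]
    omega
  · push_cast
    linear_combination congrFun hf i

theorem exists_eq_mulShift_stdAddChar [NeZero N] (χ : AddChar (ZMod N) ℂ) :
    ∃ t, stdAddChar.mulShift t = χ :=
  ((Fintype.bijective_iff_injective_and_card _).2
    ⟨AddChar.to_mulShift_inj_of_isPrimitive (isPrimitive_stdAddChar N),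
      AddChar.card_eq.symm⟩).2 χ

theorem exists_ne_zero_apply_eq_stdAddChar_intCast [NeZero N] [Nontrivial (ZMod N)]
    (Λ : Finset (AddChar (ZMod N) ℂ)) (m : ℕ) (h : N ^ Λ.card < N * (m + 1) ^ Λ.card) :
    ∃ s : ZMod N, s ≠ 0 ∧ ∀ χ ∈ Λ, ∃ k : ℤ, |k| ≤ m ∧ χ s = stdAddChar (k : ZMod N) := by
  choose t ht using fun χ : Λ => exists_eq_mulShift_stdAddChar (χ : AddChar (ZMod N) ℂ)
  obtain ⟨s, hs0, hs⟩ := exists_ne_zero_mul_eq_intCast_of_pow_lt t m (by simpa using h)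
  refine ⟨s, hs0, fun χ hχ => ?_⟩
  obtain ⟨k, hkm, hk⟩ := hs ⟨χ, hχ⟩
  refine ⟨k, hkm, ?_⟩
  rw [← hk, ← AddChar.mulShift_apply, ht]

theorem norm_one_sub_stdAddChar_intCast_le [NeZero N] (j : ℤ) :
    ‖1 - stdAddChar (j : ZMod N)‖ ≤ 2 * π * |(j : ℝ)| / N := by
  have hN : (0 : ℝ) < N := by exact_mod_cast Nat.pos_of_neZero N
  rw [stdAddChar_coe, norm_sub_rev]
  calc ‖Complex.exp (2 * π * Complex.I * j / N) - 1‖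
      = ‖Complex.exp (Complex.I * ((2 * π * j / N : ℝ) : ℂ)) - 1‖ := by push_cast; ring_nf
    _ ≤ ‖(2 * π * j / N : ℝ)‖ := norm_exp_I_mul_ofReal_sub_one_le
    _ = 2 * π * |(j : ℝ)| / N := by
      rw [Real.norm_eq_abs, abs_div, abs_mul, abs_of_pos two_pi_pos, abs_of_pos hN]

end ZMod

theorem mul_natCast_mem_bohr {N : ℕ} [NeZero N] {Λ : Finset (AddChar (ZMod N) ℂ)} {s : ZMod N}
    {m : ℕ} (hs : ∀ χ ∈ Λ, ∃ k : ℤ, |k| ≤ m ∧ χ s = ZMod.stdAddChar (k : ZMod N))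
    {r : ℝ} {i : ℕ} (hi : 2 * π * m * i ≤ r * N) : s * i ∈ bohr Λ r := by
  have hN : (0 : ℝ) < N := by exact_mod_cast Nat.pos_of_neZero N
  simp only [bohr, Finset.mem_filter, Finset.mem_univ, true_and]
  intro χ hχ
  obtain ⟨k, hkm, hk⟩ := hs χ hχ
  have hχi : χ (s * i) = ZMod.stdAddChar ((i * k : ℤ) : ZMod N) := by
    rw [mul_comm, ← nsmul_eq_mul, AddChar.map_nsmul_eq_pow, hk, ← AddChar.map_nsmul_eq_pow]
    push_cast
    rw [nsmul_eq_mul]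
  have hkm' : |(k : ℝ)| ≤ m := by exact_mod_cast hkm
  calc ‖1 - χ (s * i)‖ ≤ 2 * π * |((i * k : ℤ) : ℝ)| / N := by
        rw [hχi]; exact ZMod.norm_one_sub_stdAddChar_intCast_le (N := N) _
    _ ≤ 2 * π * (m * i) / N := by
        rw [Int.cast_mul, Int.cast_natCast, abs_mul, Nat.abs_cast, mul_comm (i : ℝ)]
        gcongr
    _ ≤ r := by rwa [div_le_iff₀ hN, ← mul_assoc]

theorem pow_lt_mul_floor_rpow_add_one_pow {N : ℕ} (hN : 1 < N) (d : ℕ) :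
    N ^ d < N * (⌊(N : ℝ) ^ (1 - 1 / d : ℝ)⌋₊ + 1) ^ d := by
  rcases d.eq_zero_or_pos with rfl | hd
  · simpa using hN
  have hN0 : (0 : ℝ) < N := by positivity
  have hroot : (N : ℝ) ^ d = N * ((N : ℝ) ^ (1 - 1 / d : ℝ)) ^ d := by
    rw [← Real.rpow_natCast _ d, ← Real.rpow_natCast _ d, ← Real.rpow_mul hN0.le,
      ← Real.rpow_one_add' hN0.le]
    · congr 1; field_simp; ring
    · field_simp
      rw [add_sub_cancel]
      positivity
  have key : (N : ℝ) ^ d < N * ((⌊(N : ℝ) ^ (1 - 1 / d : ℝ)⌋₊ : ℝ) + 1) ^ d := by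
    rw [hroot]
    gcongr
    exact Nat.lt_floor_add_one _
  exact_mod_cast key

theorem bohr_contains_long_ap_general (N : ℕ) [hN : Fact N.Prime]
    (Λ : Finset (AddChar (ZMod N) ℂ)) (d : ℕ) (hd : Λ.card = d)
    (r : ℝ) :
    ∃ (a s : ZMod N) (L : ℕ), s ≠ 0 ∧
      r * (N : ℝ) ^ ((1 : ℝ) / d) / (2 * Real.pi) ≤ L ∧
      ∀ i : ℕ, i < L → a + s * (i : ZMod N) ∈ bohr Λ r := by
  have hN0 : (0 : ℝ) < N := by exact_mod_cast hN.out.pos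
  set m := ⌊(N : ℝ) ^ (1 - 1 / d : ℝ)⌋₊
  obtain ⟨s, hs0, hs⟩ := ZMod.exists_ne_zero_apply_eq_stdAddChar_intCast Λ m
    (hd ▸ pow_lt_mul_floor_rpow_add_one_pow hN.out.one_lt d)
  refine ⟨0, s, _, hs0, Nat.le_ceil _, fun i hi => ?_⟩
  rw [zero_add]
  refine mul_natCast_mem_bohr hs ?_
  have hi' : (i : ℝ) < r * (N : ℝ) ^ ((1 : ℝ) / d) / (2 * π) := Nat.lt_ceil.1 hi
  calc 2 * π * m * i
      ≤ 2 * π * (N : ℝ) ^ (1 - 1 / d : ℝ) * (r * (N : ℝ) ^ ((1 : ℝ) / d) / (2 * π)) := by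
        gcongr
        exact Nat.floor_le (by positivity)
    _ = r * ((N : ℝ) ^ (1 - 1 / d : ℝ) * (N : ℝ) ^ ((1 : ℝ) / d)) := by
        field_simp
    _ = r * N := by rw [← Real.rpow_add hN0, sub_add_cancel, Real.rpow_one]

/-- A Bohr neighborhood in `ℤ_N`, `N` prime, contains an arithmetic progression of
length at least `r·N^{1/d}/(2π)`. -/
theorem bohr_contains_long_ap (N : ℕ) [hN : Fact N.Prime]
    (Λ : Finset (AddChar (ZMod N) ℂ)) (d : ℕ) (hd : Λ.card = d)
    (r : ℝ) (hr : r ∈ Set.Icc (0 : ℝ) 2) :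
    ∃ (a s : ZMod N) (L : ℕ), s ≠ 0 ∧
      r * (N : ℝ) ^ ((1 : ℝ) / d) / (2 * Real.pi) ≤ L ∧
      ∀ i : ℕ, i < L → a + s * (i : ZMod N) ∈ bohr Λ r :=
  bohr_contains_long_ap_general N (hN := hN) Λ d hd r
end

section
/- Let ‖·‖ be a norm on the space of complex-valued functions on a finite group G (possibly non-abelian) of size N, and let T : G × G → G with associated parameter κ = max(κ₁, κ₂), where κ₁ = max_{x,a ∈ G} |{b ∈ G : T(a,b) = x}| and κ₂ = max_{x,a ∈ G} |{b ∈ G : T(b,a) = x}|. Suppose δ₁, δ₂ > 0 and A ⊆ G satisfies |A| = θN ≥ δ₂N > 0. Then there exists a function f : G → [0,1] with ‖f − 1_A‖ ≤ δ₁ such that for every pair of sets B, C ⊆ G with ‖1_B − 1_A‖ ≤ δ₁ and ‖1_C − 1_A‖ ≤ δ₁, we have 1_B *_T 1_C(x) ≤ δ₂⁻² f *_T f(x) + 2κδ₂N for every x ∈ G. -/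
open Finset
open scoped Classical

/-- The `T`-convolution `f *_T g(x) = Σ_{T(a,b)=x} f(a)g(b)` on a finite group. -/
noncomputable def convT {G : Type*} [Group G] [Fintype G] (T : G × G → G)
    (f g : G → ℝ) (x : G) : ℝ :=
  ∑ p : G × G, if T p = x then f p.1 * g p.2 else 0

/-- `κ₁(T) = max_{x,a} |{b : T(a,b) = x}|`. -/
noncomputable def kappa1 {G : Type*} [Group G] [Fintype G] (T : G × G → G) : ℕ :=
  Finset.univ.sup fun p : G × G => (Finset.univ.filter fun b => T (p.2, b) = p.1).card

/-- `κ₂(T) = max_{x,a} |{b : T(b,a) = x}|`. -/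
noncomputable def kappa2 {G : Type*} [Group G] [Fintype G] (T : G × G → G) : ℕ :=
  Finset.univ.sup fun p : G × G => (Finset.univ.filter fun b => T (b, p.2) = p.1).card

/-- `κ(T) = max(κ₁, κ₂)`. -/
noncomputable def kappa {G : Type*} [Group G] [Fintype G] (T : G × G → G) : ℕ :=
  max (kappa1 T) (kappa2 T)

/-- Coercion of a real-valued function to a complex-valued one. -/
noncomputable def toC {G : Type*} (f : G → ℝ) : G → ℂ := fun x => (f x : ℂ)

/-!
Take a maximal family `𝓕` of sets `B` with `‖1_B - 1_A‖ ≤ δ₁` that together cover at least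
`|𝓕| δ₂ N` points outside `A`; since these points and `A` fit into `G`, `(|𝓕| + 1) δ₂ ≤ 1`.
Then `f = 1_A + δ₂ ∑_{B ∈ 𝓕} (1_B - 1_A)` takes values in `[0, 1]`, is at least `δ₂` on
`A ∪ ⋃ 𝓕`, and `‖f - 1_A‖ ≤ δ₂ |𝓕| δ₁ ≤ δ₁`. By maximality, every admissible `B` has at most
`δ₂ N` points outside `A ∪ ⋃ 𝓕`, so at most `δ₂ N` points where `f < δ₂`. Away from these,
`1_B(a) 1_C(b) ≤ δ₂⁻² f(a) f(b)`, and each exceptional point lies in at most `κ` pairs `(a, b)`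
with `T(a, b) = x`.
-/

section Indicator

variable {α : Type*}

theorem indR_nonneg (S : Finset α) (a : α) : 0 ≤ indR S a := by
  unfold indR; split_ifs <;> norm_num

variable [Fintype α] in
theorem sum_indR_mul_le (S : Finset α) {c : α → ℝ} {k : ℝ} (hc : ∀ a, c a ≤ k) :
    ∑ a, indR S a * c a ≤ k * #S := by
  calc ∑ a, indR S a * c a ≤ ∑ a, indR S a * k := by
        gcongr with a
        · exact indR_nonneg S a
        · exact hc a
    _ = k * #S := by simp [indR, mul_comm]

theorem indR_mul_indR_le {f : α → ℝ} (hf : ∀ x, 0 ≤ f x) {δ : ℝ} (hδ : 0 < δ)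
    (B C : Finset α) (a b : α) :
    indR B a * indR C b
      ≤ (δ ^ 2)⁻¹ * (f a * f b) + indR {a ∈ B | f a < δ} a + indR {b ∈ C | f b < δ} b := by
  have hfab : 0 ≤ (δ ^ 2)⁻¹ * (f a * f b) := by have := hf a; have := hf b; positivity
  unfold indR
  simp only [mem_filter]
  split_ifs <;> try linarith
  rename_i haB hbC hfa hfb
  rw [mul_one, add_zero, add_zero, one_le_inv_mul₀ (by positivity), sq]
  exact mul_le_mul (not_lt.1 (hfa ⟨haB, ·⟩)) (not_lt.1 (hfb ⟨hbC, ·⟩)) hδ.le (hf a)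

end Indicator

section Family

variable {α : Type*} [Fintype α]

theorem exists_saturated_family (Q : Finset α → Prop) (A : Finset α) {ε : ℝ} (hε : 0 ≤ ε) :
    ∃ 𝓕 : Finset (Finset α), (∀ B ∈ 𝓕, Q B) ∧ #𝓕 * ε ≤ #(𝓕.biUnion id \ A) ∧
      ∀ B, Q B → #(B \ (A ∪ 𝓕.biUnion id)) ≤ ε := by
  set good : Set (Finset (Finset α)) :=
    {𝓕 | (∀ B ∈ 𝓕, Q B) ∧ #𝓕 * ε ≤ #(𝓕.biUnion id \ A)}
  obtain ⟨𝓕, ⟨h𝓕Q, h𝓕card⟩, hmax⟩ :=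
    good.toFinite.exists_maximal ⟨∅, by simp [good]⟩
  refine ⟨𝓕, h𝓕Q, h𝓕card, fun B hB => ?_⟩
  by_contra! hnew
  have hB𝓕 : B ∉ 𝓕 := by
    intro hB𝓕
    have : B \ (A ∪ 𝓕.biUnion id) = ∅ :=
      sdiff_eq_empty_iff_subset.2 (subset_union_right.trans' (subset_biUnion_of_mem id hB𝓕))
    rw [this, card_empty, Nat.cast_zero] at hnew
    linarith
  have hgrow : #(𝓕.biUnion id \ A) + #(B \ (A ∪ 𝓕.biUnion id))
      ≤ #((insert B 𝓕).biUnion id \ A) := by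
    rw [← card_union_of_disjoint (disjoint_sdiff.mono_left (sdiff_subset.trans subset_union_right))]
    refine card_le_card fun x hx => ?_
    simp only [mem_union, mem_sdiff, biUnion_insert, id] at hx ⊢
    tauto
  have hins : insert B 𝓕 ∈ good := by
    refine ⟨forall_mem_insert _ _ _ |>.2 ⟨hB, h𝓕Q⟩, ?_⟩
    rw [card_insert_of_notMem hB𝓕]
    have : ((#(𝓕.biUnion id \ A) + #(B \ (A ∪ 𝓕.biUnion id)) : ℕ) : ℝ)
        ≤ #((insert B 𝓕).biUnion id \ A) := by exact_mod_cast hgrow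
    push_cast at this ⊢
    linarith
  exact hB𝓕 (hmax hins (subset_insert B 𝓕) (mem_insert_self B 𝓕))

end Family

section FamilyWeight

variable {α : Type*} (A : Finset α) (𝓕 : Finset (Finset α)) (δ : ℝ)

noncomputable def familyWeight : α → ℝ := indR A + δ • ∑ B ∈ 𝓕, (indR B - indR A)

theorem familyWeight_apply (x : α) :
    familyWeight A 𝓕 δ x = (if x ∈ A then 1 - δ * #𝓕 else 0) + δ * #{B ∈ 𝓕 | x ∈ B} := by
  simp only [familyWeight, Pi.add_apply, Pi.smul_apply, Finset.sum_apply, Pi.sub_apply,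
    smul_eq_mul]
  rw [sum_sub_distrib, sum_const, nsmul_eq_mul]
  simp only [indR, sum_boole]
  split_ifs <;> ring

variable {A 𝓕 δ}

theorem familyWeight_mem_Icc (hδ : 0 ≤ δ) (h𝓕 : (#𝓕 + 1) * δ ≤ 1) (x : α) :
    familyWeight A 𝓕 δ x ∈ Set.Icc 0 1 := by
  have hcount : (#{B ∈ 𝓕 | x ∈ B} : ℝ) ≤ #𝓕 := by exact_mod_cast card_filter_le _ _
  rw [familyWeight_apply]
  constructor <;> split_ifs <;> nlinarith [(#{B ∈ 𝓕 | x ∈ B}).cast_nonneg (α := ℝ)]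

theorem le_familyWeight (hδ : 0 ≤ δ) (h𝓕 : (#𝓕 + 1) * δ ≤ 1) {x : α}
    (hx : x ∈ A ∪ 𝓕.biUnion id) : δ ≤ familyWeight A 𝓕 δ x := by
  rw [familyWeight_apply]
  by_cases hxA : x ∈ A
  · rw [if_pos hxA]
    nlinarith [(#{B ∈ 𝓕 | x ∈ B}).cast_nonneg (α := ℝ)]
  · obtain ⟨B, hB, hxB⟩ := mem_biUnion.1 ((mem_union.1 hx).resolve_left hxA)
    have hcount : (1 : ℝ) ≤ #{B ∈ 𝓕 | x ∈ B} := by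
      exact_mod_cast card_pos.2 ⟨B, mem_filter.2 ⟨hB, hxB⟩⟩
    rw [if_neg hxA]
    nlinarith

theorem filter_familyWeight_lt_subset (hδ : 0 ≤ δ) (h𝓕 : (#𝓕 + 1) * δ ≤ 1) (B : Finset α) :
    {a ∈ B | familyWeight A 𝓕 δ a < δ} ⊆ B \ (A ∪ 𝓕.biUnion id) := fun a ha => by
  rw [mem_filter] at ha
  exact mem_sdiff.2 ⟨ha.1, fun hA => (le_familyWeight hδ h𝓕 hA).not_gt ha.2⟩

theorem seminorm_familyWeight_sub_le (p : Seminorm ℂ (α → ℂ)) (hδ : 0 ≤ δ) {r : ℝ}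
    (h𝓕 : ∀ B ∈ 𝓕, p (toC (indR B) - toC (indR A)) ≤ r) :
    p (toC (familyWeight A 𝓕 δ) - toC (indR A)) ≤ δ * (#𝓕 * r) := by
  have hsub : toC (familyWeight A 𝓕 δ) - toC (indR A)
      = (δ : ℂ) • ∑ B ∈ 𝓕, (toC (indR B) - toC (indR A)) := by
    funext x
    simp only [toC, familyWeight, Pi.add_apply, Pi.sub_apply, Pi.smul_apply, Finset.sum_apply,
      smul_eq_mul]
    push_cast
    ring
  rw [hsub, map_smul_eq_mul, Complex.norm_real, Real.norm_of_nonneg hδ]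
  gcongr
  calc p (∑ B ∈ 𝓕, (toC (indR B) - toC (indR A)))
      ≤ ∑ B ∈ 𝓕, p (toC (indR B) - toC (indR A)) :=
        le_sum_of_subadditive p (map_zero p).le (map_add_le_add p) _ _
    _ ≤ #𝓕 * r := by simpa using sum_le_sum h𝓕

end FamilyWeight

section Convolution

variable {G : Type*} [Group G] [Fintype G] (T : G × G → G)

theorem card_filter_apply_left_le_kappa (a x : G) : #{b | T (a, b) = x} ≤ kappa T :=
  (le_sup (f := fun p : G × G => #{b | T (p.2, b) = p.1}) (mem_univ (x, a))).trans
    (le_max_left _ _)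

theorem card_filter_apply_right_le_kappa (b x : G) : #{a | T (a, b) = x} ≤ kappa T :=
  (le_sup (f := fun p : G × G => #{a | T (a, p.2) = p.1}) (mem_univ (x, b))).trans
    (le_max_right _ _)

theorem convT_le_of_mul_le {g h f s t : G → ℝ} {c : ℝ}
    (hle : ∀ a b, g a * h b ≤ c * (f a * f b) + s a + t b) (x : G) :
    convT T g h x ≤ c * convT T f f x + convT T s 1 x + convT T 1 t x := by
  simp only [convT, mul_sum, ← sum_add_distrib]
  refine sum_le_sum fun p _ => ?_
  split_ifs
  · simpa using hle p.1 p.2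
  · simp

theorem convT_one_right (u : G → ℝ) (x : G) :
    convT T u 1 x = ∑ a, u a * #{b | T (a, b) = x} := by
  rw [convT, Fintype.sum_prod_type]
  refine sum_congr rfl fun a _ => ?_
  rw [← sum_filter]
  simp [mul_comm]

theorem convT_one_left (v : G → ℝ) (x : G) :
    convT T 1 v x = ∑ b, v b * #{a | T (a, b) = x} := by
  rw [convT, Fintype.sum_prod_type_right]
  refine sum_congr rfl fun b _ => ?_
  rw [← sum_filter]
  simp [mul_comm]

theorem convT_indR_one_le (S : Finset G) (x : G) : convT T (indR S) 1 x ≤ kappa T * #S := by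
  rw [convT_one_right]
  exact sum_indR_mul_le S fun a => by exact_mod_cast card_filter_apply_left_le_kappa T a x

theorem convT_one_indR_le (S : Finset G) (x : G) : convT T 1 (indR S) x ≤ kappa T * #S := by
  rw [convT_one_left]
  exact sum_indR_mul_le S fun b => by exact_mod_cast card_filter_apply_right_le_kappa T b x

theorem convT_indR_indR_le {f : G → ℝ} (hf : ∀ x, 0 ≤ f x) {δ : ℝ} (hδ : 0 < δ)
    (B C : Finset G) (x : G) :
    convT T (indR B) (indR C) x
      ≤ (δ ^ 2)⁻¹ * convT T f f x + kappa T * (#{a ∈ B | f a < δ} + #{b ∈ C | f b < δ}) := by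
  calc convT T (indR B) (indR C) x
      ≤ (δ ^ 2)⁻¹ * convT T f f x + convT T (indR {a ∈ B | f a < δ}) 1 x
          + convT T 1 (indR {b ∈ C | f b < δ}) x :=
        convT_le_of_mul_le T (indR_mul_indR_le hf hδ B C) x
    _ ≤ (δ ^ 2)⁻¹ * convT T f f x + kappa T * #{a ∈ B | f a < δ}
          + kappa T * #{b ∈ C | f b < δ} := by
        gcongr
        exacts [convT_indR_one_le T _ x, convT_one_indR_le T _ x]
    _ = _ := by ring

end Convolution

theorem key_lemma_general {G : Type*} [Group G] [Fintype G] (N : ℕ) (hN : Fintype.card G = N)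
    (nrm : (G → ℂ) → ℝ)
    (h_tri : ∀ u v : G → ℂ, nrm (u + v) ≤ nrm u + nrm v)
    (h_smul : ∀ (c : ℂ) (u : G → ℂ), nrm (c • u) = ‖c‖ * nrm u)
    (T : G × G → G) (θ δ₁ δ₂ : ℝ) (hδ₁ : 0 < δ₁) (hδ₂ : 0 < δ₂)
    (A : Finset G) (hA : (A.card : ℝ) = θ * N)
    (hθδ : θ * N ≥ δ₂ * N) :
    ∃ f : G → ℝ, (∀ x, f x ∈ Set.Icc (0 : ℝ) 1) ∧
      nrm (toC f - toC (indR A)) ≤ δ₁ ∧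
      ∀ B C : Finset G,
        nrm (toC (indR B) - toC (indR A)) ≤ δ₁ →
        nrm (toC (indR C) - toC (indR A)) ≤ δ₁ →
        ∀ x : G, convT T (indR B) (indR C) x ≤
          (δ₂ ^ 2)⁻¹ * convT T f f x + 2 * (kappa T : ℝ) * δ₂ * N := by
  have hN0 : (0 : ℝ) < N := by rw [← hN]; exact_mod_cast Fintype.card_pos
  obtain ⟨𝓕, h𝓕, h𝓕card, hsat⟩ := exists_saturated_family
    (fun B => nrm (toC (indR B) - toC (indR A)) ≤ δ₁) A (ε := δ₂ * N) (by positivity)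
  have hm : (#𝓕 + 1) * δ₂ ≤ 1 := by
    have hsplit : (#(𝓕.biUnion id \ A) + #A : ℝ) ≤ N := by
      rw [← hN, ← card_univ]
      exact_mod_cast (card_sdiff_add_card _ _).trans_le (card_le_univ _)
    nlinarith
  set f := familyWeight A 𝓕 δ₂
  have hf := familyWeight_mem_Icc (A := A) hδ₂.le hm
  have hbad (B : Finset G) (hB : nrm (toC (indR B) - toC (indR A)) ≤ δ₁) :
      (#{a ∈ B | f a < δ₂} : ℝ) ≤ δ₂ * N :=
    le_trans (by exact_mod_cast card_le_card (filter_familyWeight_lt_subset hδ₂.le hm B))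
      (hsat B hB)
  refine ⟨f, hf, ?_, fun B C hB hC x => ?_⟩
  · calc nrm (toC f - toC (indR A)) ≤ δ₂ * (#𝓕 * δ₁) :=
          seminorm_familyWeight_sub_le (Seminorm.of nrm h_tri h_smul) hδ₂.le h𝓕
      _ ≤ δ₁ := by nlinarith
  · calc convT T (indR B) (indR C) x
        ≤ (δ₂ ^ 2)⁻¹ * convT T f f x + kappa T * (#{a ∈ B | f a < δ₂} + #{b ∈ C | f b < δ₂}) :=
          convT_indR_indR_le T (fun a => (hf a).1) hδ₂ B C x
      _ ≤ (δ₂ ^ 2)⁻¹ * convT T f f x + kappa T * (δ₂ * N + δ₂ * N) := by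
          gcongr <;> exact hbad _ ‹_›
      _ = _ := by ring

/-- The key lemma: given a norm `‖·‖` on complex functions on a finite group `G`, a map
`T : G × G → G`, and `A ⊆ G` with `|A| = θN ≥ δ₂N > 0`, there is `f : G → [0,1]` with
`‖f − 1_A‖ ≤ δ₁` such that every pair `B, C` with `‖1_B − 1_A‖, ‖1_C − 1_A‖ ≤ δ₁` satisfies
`1_B *_T 1_C(x) ≤ δ₂⁻² f *_T f(x) + 2κδ₂N` for all `x`. -/
theorem key_lemma {G : Type*} [Group G] [Fintype G] (N : ℕ) (hN : Fintype.card G = N)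
    (nrm : (G → ℂ) → ℝ)
    (h_tri : ∀ u v : G → ℂ, nrm (u + v) ≤ nrm u + nrm v)
    (h_smul : ∀ (c : ℂ) (u : G → ℂ), nrm (c • u) = ‖c‖ * nrm u)
    (h_def : ∀ u : G → ℂ, nrm u = 0 ↔ u = 0)
    (T : G × G → G) (θ δ₁ δ₂ : ℝ) (hδ₁ : 0 < δ₁) (hδ₂ : 0 < δ₂)
    (A : Finset G) (hA : (A.card : ℝ) = θ * N)
    (hθδ : θ * N ≥ δ₂ * N) (hpos : δ₂ * N > 0) :
    ∃ f : G → ℝ, (∀ x, f x ∈ Set.Icc (0 : ℝ) 1) ∧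
      nrm (toC f - toC (indR A)) ≤ δ₁ ∧
      ∀ B C : Finset G,
        nrm (toC (indR B) - toC (indR A)) ≤ δ₁ →
        nrm (toC (indR C) - toC (indR A)) ≤ δ₁ →
        ∀ x : G, convT T (indR B) (indR C) x ≤
          (δ₂ ^ 2)⁻¹ * convT T f f x + 2 * (kappa T : ℝ) * δ₂ * N :=
  key_lemma_general N hN nrm h_tri h_smul T θ δ₁ δ₂ hδ₁ hδ₂ A hA hθδ
end

section
/- Let N ≥ 2 be an integer and let x₁, ..., x_k ∈ ℤ_N. Then there exists an integer n with n ≢ 0 (mod N) such that ‖n·x_i‖ ≤ N^{1−1/(k+1)} for every i = 1, ..., k, where ‖x‖ denotes the absolute value of the least residue in absolute value congruent to x modulo N. -/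
/-!
Put `b = N ^ (1 - 1/(k+1))` and `M = ⌊b⌋ + 1`, so that `M ^ (k+1) > b ^ (k+1) = N ^ k`. The `N · M ^ k`
pairs `(n, t)` with `n ∈ ℤ_N` and `t ∈ {0, …, M-1}^k` are mapped to `(n x_i - t_i)_i ∈ ℤ_N^k`, a set of
only `N ^ k` elements, so two distinct pairs `(m, s)`, `(m', s')` collide. Then
`(m - m') x_i ≡ s_i - s'_i` with `|s_i - s'_i| < M`, and `m ≠ m'` because distinct `t`'s stay distinct
modulo `N ≥ M`.
-/

namespace ZMod

lemma abs_valMinAbs_intCast_le {N : ℕ} (z : ℤ) : |(z : ZMod N).valMinAbs| ≤ |z| := by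
  rcases N.eq_zero_or_pos with rfl | hN
  · rfl
  have : NeZero N := ⟨hN.ne'⟩
  rw [Int.abs_eq_natAbs, Int.abs_eq_natAbs, Int.ofNat_le]
  exact natAbs_min_of_le_div_two N _ _ (coe_valMinAbs _) (natAbs_valMinAbs_le _)

theorem exists_ne_zero_forall_abs_valMinAbs_mul_lt {ι : Type*} [Fintype ι] {N M : ℕ} [NeZero N]
    (hMN : M ≤ N) (hcard : N ^ Fintype.card ι < M ^ (Fintype.card ι + 1)) (x : ι → ZMod N) :
    ∃ n : ZMod N, n ≠ 0 ∧ ∀ i, |(n * x i).valMinAbs| < M := by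
  classical
  let f : ZMod N × (ι → Fin M) → ι → ZMod N := fun p i => p.1 * x i - ((p.2 i : ℕ) : ZMod N)
  have hlt : Fintype.card (ι → ZMod N) < Fintype.card (ZMod N × (ι → Fin M)) := by
    simp only [Fintype.card_prod, Fintype.card_fun, Fintype.card_fin, ZMod.card]
    calc N ^ Fintype.card ι < M ^ (Fintype.card ι + 1) := hcard
      _ = M * M ^ Fintype.card ι := pow_succ' _ _
      _ ≤ N * M ^ Fintype.card ι := Nat.mul_le_mul_right _ hMN
  obtain ⟨⟨m, s⟩, ⟨m', s'⟩, hne, heq⟩ := Fintype.exists_ne_map_eq_of_card_lt f hlt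
  have hdiff (i : ι) : (m - m') * x i = (((s i : ℕ) - (s' i : ℕ) : ℤ) : ZMod N) := by
    push_cast
    linear_combination congrFun heq i
  have hsmall (i : ι) : |((s i : ℕ) - (s' i : ℕ) : ℤ)| < M := by
    have := (s i).isLt
    have := (s' i).isLt
    rw [abs_lt]
    constructor <;> omega
  refine ⟨m - m', fun hm => hne ?_, fun i => ?_⟩
  · obtain rfl := sub_eq_zero.mp hm
    refine Prod.ext rfl (funext fun i => Fin.ext (show (s i : ℕ) = s' i from ?_))
    have hdvd : (N : ℤ) ∣ (s i : ℕ) - (s' i : ℕ) := by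
      rw [← ZMod.intCast_zmod_eq_zero_iff_dvd, ← hdiff, sub_self, zero_mul]
    have := Int.eq_zero_of_abs_lt_dvd hdvd ((hsmall i).trans_le (by exact_mod_cast hMN))
    omega
  · rw [hdiff]
    exact (abs_valMinAbs_intCast_le _).trans_lt (hsmall i)

end ZMod

lemma Real.rpow_one_sub_inv_succ_pow {a : ℝ} (ha : 0 ≤ a) (k : ℕ) :
    (a ^ ((1 : ℝ) - 1 / (k + 1))) ^ (k + 1) = a ^ k := by
  rw [← Real.rpow_natCast _ (k + 1), ← Real.rpow_mul ha, ← Real.rpow_natCast a k]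
  congr 1
  push_cast
  field_simp
  ring

/-- Dirichlet box principle: given `x₁, ..., x_k ∈ ℤ_N` there is `n ≢ 0 (mod N)` with
`‖n·x_i‖ ≤ N^{1−1/(k+1)}` for all `i`, where `‖·‖` is the distance to `0` measured by the
least residue in absolute value. -/
theorem dirichlet_box (N : ℕ) (hN : 2 ≤ N) (k : ℕ) (x : Fin k → ZMod N) :
    ∃ n : ℤ, (n : ZMod N) ≠ 0 ∧
      ∀ i : Fin k,
        (|((n : ZMod N) * x i).valMinAbs| : ℝ) ≤
          (N : ℝ) ^ ((1 : ℝ) - 1 / (k + 1)) := by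
  have : NeZero N := ⟨by omega⟩
  set b : ℝ := (N : ℝ) ^ ((1 : ℝ) - 1 / (k + 1))
  have hb0 : 0 ≤ b := by positivity
  have hbN : b < N :=
    Real.rpow_lt_self_of_one_lt (by exact_mod_cast hN) (sub_lt_self _ (by positivity))
  have hcard : N ^ k < (⌊b⌋₊ + 1) ^ (k + 1) := by
    have : (N : ℝ) ^ k < ((⌊b⌋₊ + 1 : ℕ) : ℝ) ^ (k + 1) := by
      rw [← Real.rpow_one_sub_inv_succ_pow (Nat.cast_nonneg N) k]
      exact pow_lt_pow_left₀ (by exact_mod_cast Nat.lt_floor_add_one b) hb0 (by omega)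
    exact_mod_cast this
  obtain ⟨n, hn0, hn⟩ := ZMod.exists_ne_zero_forall_abs_valMinAbs_mul_lt
    ((Nat.floor_lt hb0).mpr hbN) (by simpa using hcard) x
  refine ⟨n.valMinAbs, by rwa [ZMod.coe_valMinAbs], fun i => ?_⟩
  have hle : |(n * x i).valMinAbs| ≤ ⌊b⌋₊ := by have := hn i; omega
  rw [ZMod.coe_valMinAbs]
  calc (|(n * x i).valMinAbs| : ℝ) ≤ (⌊b⌋₊ : ℝ) := by exact_mod_cast hle
    _ ≤ b := Nat.floor_le hb0
end

section
/- Let G be a finite additive abelian group with |G| = N, let A ⊆ G with |A| = θN > 0, and let δ₁ > 0. Let Λ be a finite set of characters of G such that |1̂_A(χ)| ≤ δ₁N/2 for every character χ not in Λ. Then for every t in the Bohr neighborhood B(Λ, δ₁/θ), the function 1_{A+t} − 1_A is δ₁-uniform, where A+t = {a+t : a ∈ A}. -/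
/-!
Translating `A` by `t` multiplies its Fourier coefficient at `χ` by `χ t`, so the coefficient of
`1_{A+t} − 1_A` at `χ` is `(χ t − 1) · 1̂_A(χ)`. For `χ ∈ Λ` the first factor is at most `δ₁/θ` and
the second at most `|A| = θN`; for `χ ∉ Λ` the first factor is at most `2` and the second at most
`δ₁N/2`.
-/

open Finset
open scoped Classical Pointwise

section Fourier

variable {G : Type*} [AddCommGroup G] [Fintype G]

lemma ft_sub (f g : G → ℝ) (χ : AddChar G ℂ) : ft (f - g) χ = ft f χ - ft g χ := by
  simp only [ft, Pi.sub_apply, Complex.ofReal_sub, sub_mul, sum_sub_distrib]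

lemma ft_comp_sub (f : G → ℝ) (t : G) (χ : AddChar G ℂ) :
    ft (fun x => f (x - t)) χ = χ t * ft f χ := by
  rw [ft, ← Equiv.sum_comp (Equiv.addRight t), ft, mul_sum]
  refine sum_congr rfl fun y _ => ?_
  simp only [Equiv.coe_addRight, add_sub_cancel_right, AddChar.map_add_eq_mul]
  ring

lemma ft_indR (A : Finset G) (χ : AddChar G ℂ) : ft (indR A) χ = ∑ a ∈ A, χ a := by
  simp only [ft, indR, apply_ite Complex.ofReal, Complex.ofReal_one, Complex.ofReal_zero,
    ite_mul, one_mul, zero_mul, sum_ite_mem, univ_inter]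

lemma norm_ft_indR_le (A : Finset G) (χ : AddChar G ℂ) : ‖ft (indR A) χ‖ ≤ #A := by
  rw [ft_indR]
  refine (norm_sum_le _ _).trans_eq ?_
  simp

end Fourier

lemma indR_image_add {G : Type*} [AddCommGroup G] (A : Finset G) (t : G) :
    indR (A.image (· + t)) = fun x => indR A (x - t) := by
  funext x
  simp only [indR, mem_image, ← eq_sub_iff_add_eq, exists_eq_right]

lemma AddChar.norm_apply_sub_one_le_two {G : Type*} [AddGroup G] [Finite G] (χ : AddChar G ℂ)
    (t : G) : ‖χ t - 1‖ ≤ 2 := by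
  refine (norm_sub_le _ _).trans ?_
  rw [χ.norm_apply, norm_one]
  norm_num

theorem translate_uniform_general {G : Type*} [AddCommGroup G] [Fintype G] (N : ℕ)
    (hN : Fintype.card G = N)
    (A : Finset G) (θ : ℝ) (hA : (A.card : ℝ) = θ * N) (hApos : θ * N > 0)
    (δ₁ : ℝ)
    (Λ : Finset (AddChar G ℂ))
    (hΛ : ∀ χ : AddChar G ℂ, χ ∉ Λ → ‖ft (indR A) χ‖ ≤ δ₁ * N / 2) :
    ∀ t ∈ bohr Λ (δ₁ / θ),
      IsUniform (indR (A.image fun a => a + t) - indR A) δ₁ := by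
  intro t ht χ
  have hθ : θ ≠ 0 := left_ne_zero_of_mul hApos.ne'
  rw [ft_sub, indR_image_add, ft_comp_sub, ← sub_one_mul, norm_mul, hN]
  by_cases hχ : χ ∈ Λ
  · have hχt : ‖χ t - 1‖ ≤ δ₁ / θ := by
      rw [norm_sub_rev]
      exact (mem_filter.mp ht).2 χ hχ
    calc ‖χ t - 1‖ * ‖ft (indR A) χ‖
        ≤ δ₁ / θ * (θ * N) :=
          mul_le_mul hχt (hA ▸ norm_ft_indR_le A χ) (norm_nonneg _) ((norm_nonneg _).trans hχt)
      _ = δ₁ * N := by field_simp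
  · calc ‖χ t - 1‖ * ‖ft (indR A) χ‖
        ≤ 2 * (δ₁ * N / 2) :=
          mul_le_mul (χ.norm_apply_sub_one_le_two t) (hΛ χ hχ) (norm_nonneg _) zero_le_two
      _ = δ₁ * N := by ring

/-- If all Fourier coefficients of `1_A` outside `Λ` are at most `δ₁N/2`, then for every
`t` in the Bohr neighborhood `B(Λ, δ₁/θ)` the function `1_{A+t} − 1_A` is `δ₁`-uniform. -/
theorem translate_uniform {G : Type*} [AddCommGroup G] [Fintype G] (N : ℕ)
    (hN : Fintype.card G = N)
    (A : Finset G) (θ : ℝ) (hA : (A.card : ℝ) = θ * N) (hApos : θ * N > 0)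
    (δ₁ : ℝ) (hδ₁ : 0 < δ₁)
    (Λ : Finset (AddChar G ℂ))
    (hΛ : ∀ χ : AddChar G ℂ, χ ∉ Λ → ‖ft (indR A) χ‖ ≤ δ₁ * N / 2) :
    ∀ t ∈ bohr Λ (δ₁ / θ),
      IsUniform (indR (A.image fun a => a + t) - indR A) δ₁ :=
  translate_uniform_general N hN A θ hA hApos δ₁ Λ hΛ
end
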